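/- Let $L\ge 0$, $M\in\mathbb{R}$, $Y\in\mathbb{R}$ and define $\Delta = 4Y^4M^2+Y^2(L^2+20LM^2-8M^4)+4(L+M^2)^3$. Then $\Delta\ge 0$; moreover if $L>0$ then $\Delta>0$, and if $L=0$ then $\Delta=4M^2(Y-M)^2(Y+M)^2$, so $\Delta=0$ iff $M=0$ or $Y=\pm M$. -/
import Mathlib


/-- Sign of the cubic discriminant quantity `Δ` in the case `R = 0` (phase gradient
parallel to the mean velocity) of the hyperbolicity analysis. -/
theorem discriminant_nonneg_parallel_case (L M Y : ℝ) (hL : 0 ≤ L) :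
    (0 ≤ 4 * Y ^ 4 * M ^ 2 + Y ^ 2 * (L ^ 2 + 20 * L * M ^ 2 - 8 * M ^ 4)
        + 4 * (L + M ^ 2) ^ 3) ∧
    (0 < L → 0 < 4 * Y ^ 4 * M ^ 2 + Y ^ 2 * (L ^ 2 + 20 * L * M ^ 2 - 8 * M ^ 4)
        + 4 * (L + M ^ 2) ^ 3) ∧
    (L = 0 →
      (4 * Y ^ 4 * M ^ 2 + Y ^ 2 * (L ^ 2 + 20 * L * M ^ 2 - 8 * M ^ 4)
          + 4 * (L + M ^ 2) ^ 3
        = 4 * M ^ 2 * (Y - M) ^ 2 * (Y + M) ^ 2) ∧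
      (4 * Y ^ 4 * M ^ 2 + Y ^ 2 * (L ^ 2 + 20 * L * M ^ 2 - 8 * M ^ 4)
          + 4 * (L + M ^ 2) ^ 3 = 0 ↔ M = 0 ∨ Y = M ∨ Y = -M)) := by
  have key : 4 * Y ^ 4 * M ^ 2 + Y ^ 2 * (L ^ 2 + 20 * L * M ^ 2 - 8 * M ^ 4)
        + 4 * (L + M ^ 2) ^ 3
      = 4 * (M ^ 2 * (Y ^ 2 - M ^ 2) ^ 2 + L ^ 3 + 3 * L ^ 2 * M ^ 2 + 3 * L * M ^ 4)
        + Y ^ 2 * (L ^ 2 + 20 * L * M ^ 2) := by ring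
  refine ⟨?_, ?_, ?_⟩
  · rw [key]; positivity
  · intro hLpos
    rw [key]
    have h1 : 0 < L ^ 3 := by positivity
    nlinarith [sq_nonneg M, sq_nonneg (Y ^ 2 - M ^ 2), sq_nonneg Y, mul_nonneg hL (sq_nonneg M),
      mul_nonneg (mul_nonneg hL hL) (sq_nonneg Y), mul_nonneg (mul_nonneg hL (sq_nonneg M)) (sq_nonneg Y),
      mul_nonneg (sq_nonneg M) (sq_nonneg (Y ^ 2 - M ^ 2)), mul_nonneg (mul_nonneg hL hL) (sq_nonneg M)]
  · intro h0
    subst h0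
    constructor
    · ring
    · constructor
      · intro h
        have h' : M * (Y - M) * (Y + M) = 0 := by nlinarith [sq_nonneg (M * (Y - M) * (Y + M))]
        rcases mul_eq_zero.1 h' with h1 | h2
        · rcases mul_eq_zero.1 h1 with h3 | h4
          · exact Or.inl h3
          · exact Or.inr (Or.inl (by linarith))
        · exact Or.inr (Or.inr (by linarith))
      · rintro (h | h | h) <;> subst h <;> ring
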